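/- Let f : [a,b] → ℝ be convex, x ∈ [a,b]^n, and p nonnegative with ∑pᵢ = 1. With uniform weights qᵢ = 1/n and m₁ = n·min_i pᵢ, define p'ᵢ = pᵢ − m₁/n and x'ᵢ = xᵢ at non-minimizing indices, and p'ᵢ = m₁/s, x'ᵢ = (1/n)∑ⱼxⱼ at the s minimizing indices; let m₂ = n·min_i p'ᵢ. Then ∑pᵢf(xᵢ) − f(∑pᵢxᵢ) ≥ m₁·[(1/n)∑f(xᵢ) − f((1/n)∑xᵢ)] + m₂·[(1/n)∑f(x'ᵢ) − f((1/n)∑x'ᵢ)]. -/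

import Mathlib

/-!
If `ν q ≤ p` for probability weights `p, q`, then `p` is the mixture of `ν q` and `p - ν q`;
Jensen's inequality for the `q`-mean (weight `ν`) together with the points `xᵢ`
(weights `pᵢ - ν qᵢ`) gives `ν · gap_q(x) ≤ gap_p(x)`. Moving the removed mass `ν` onto the
`q`-mean at the indices where `pᵢ = ν qᵢ` yields weights `p'` and points `x'` with the same
barycentre and `gap_{p'}(x') = gap_p(x) - ν · gap_q(x)`, so the one-step bound applied to
`(p', x')` adds the second term.
-/

open Finset

section JensenGap

variable {ι E : Type*}

/-- The paper's `p'` and `x'`: off `S` the weight `ν qᵢ` is removed from `pᵢ`; on `S`, where nothing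
is left, the removed mass `ν` is spread evenly and the points are replaced by `y`. -/
noncomputable def collapseWeights [DecidableEq ι] (p q : ι → ℝ) (ν : ℝ) (S : Finset ι)
    (i : ι) : ℝ :=
  if i ∈ S then ν / #S else p i - ν * q i

def collapsePoints [DecidableEq ι] (x : ι → E) (y : E) (S : Finset ι) (i : ι) : E :=
  if i ∈ S then y else x i

theorem collapseWeights_nonneg [DecidableEq ι] {p q : ι → ℝ} {ν : ℝ} (S : Finset ι)
    (hν : 0 ≤ ν) (hνp : ∀ i, ν * q i ≤ p i) (i : ι) : 0 ≤ collapseWeights p q ν S i := by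
  unfold collapseWeights
  split_ifs
  · positivity
  · exact sub_nonneg.2 (hνp i)

theorem collapsePoints_mem [DecidableEq ι] {s : Set E} {x : ι → E} {y : E} (S : Finset ι)
    (hx : ∀ i, x i ∈ s) (hy : y ∈ s) (i : ι) : collapsePoints x y S i ∈ s := by
  unfold collapsePoints
  split_ifs
  exacts [hy, hx i]

variable [Fintype ι]

section Collapse

variable [DecidableEq ι] {p q : ι → ℝ} {ν : ℝ} {S : Finset ι}

theorem sum_collapseWeights_smul {M : Type*} [AddCommGroup M] [Module ℝ M] (g : E → M)
    (x : ι → E) (y : E) (hS : S.Nonempty) (hpS : ∀ i ∈ S, p i = ν * q i) :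
    ∑ i, collapseWeights p q ν S i • g (collapsePoints x y S i) =
      ∑ i, p i • g (x i) - ν • ∑ i, q i • g (x i) + ν • g y := by
  have hterm : ∀ i, collapseWeights p q ν S i • g (collapsePoints x y S i) =
      (if i ∈ S then (ν / #S) • g y else 0) + (p i - ν * q i) • g (x i) := by
    intro i
    by_cases hi : i ∈ S
    · simp [collapseWeights, collapsePoints, hi, hpS i hi]
    · simp [collapseWeights, collapsePoints, hi]
  have hS_part : (∑ i, if i ∈ S then (ν / #S) • g y else 0) = ν • g y := by
    have hcard : (#S : ℝ) ≠ 0 := Nat.cast_ne_zero.2 hS.card_ne_zero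
    rw [sum_ite_mem, univ_inter, sum_const, ← Nat.cast_smul_eq_nsmul ℝ, smul_smul,
      mul_div_cancel₀ _ hcard]
  simp only [hterm, sum_add_distrib, hS_part, sub_smul, mul_smul, sum_sub_distrib, ← smul_sum]
  abel

theorem sum_collapseWeights (hp : ∑ i, p i = 1) (hq : ∑ i, q i = 1) (hS : S.Nonempty)
    (hpS : ∀ i ∈ S, p i = ν * q i) : ∑ i, collapseWeights p q ν S i = 1 := by
  simpa [hp, hq] using
    sum_collapseWeights_smul (fun _ : ℝ ↦ (1 : ℝ)) (fun _ : ι ↦ (0 : ℝ)) 0 hS hpS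

end Collapse

variable [AddCommGroup E] [Module ℝ E]

def jensenGap (f : E → ℝ) (w : ι → ℝ) (x : ι → E) : ℝ :=
  ∑ i, w i * f (x i) - f (∑ i, w i • x i)

theorem jensenGap_const (f : E → ℝ) (c : ℝ) (x : ι → E) :
    jensenGap f (fun _ ↦ c) x = c * ∑ i, f (x i) - f (c • ∑ i, x i) := by
  simp only [jensenGap, mul_sum, smul_sum]

theorem smul_jensenGap_le_jensenGap {s : Set E} {f : E → ℝ} (hf : ConvexOn ℝ s f)
    {x : ι → E} (hx : ∀ i, x i ∈ s) {p q : ι → ℝ} (hp : ∑ i, p i = 1)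
    (hq₀ : ∀ i, 0 ≤ q i) (hq : ∑ i, q i = 1) {ν : ℝ} (hν : 0 ≤ ν)
    (hνp : ∀ i, ν * q i ≤ p i) :
    ν * jensenGap f q x ≤ jensenGap f p x := by
  have hmean : ∑ i, q i • x i ∈ s :=
    hf.1.sum_mem (fun i _ ↦ hq₀ i) hq (fun i _ ↦ hx i)
  let w : Option ι → ℝ := fun o ↦ o.elim ν fun i ↦ p i - ν * q i
  let z : Option ι → E := fun o ↦ o.elim (∑ i, q i • x i) x
  have hw : ∑ o, w o = 1 := by
    simp [w, Fintype.sum_option, sum_sub_distrib, ← mul_sum, hp, hq]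
  have hwz : ∑ o, w o • z o = ∑ i, p i • x i := by
    simp [w, z, Fintype.sum_option, sub_smul, sum_sub_distrib, mul_smul, ← smul_sum]
  have hjensen := hf.map_sum_le (t := univ) (w := w) (p := z)
    (fun o _ ↦ o.rec hν fun i ↦ sub_nonneg.2 (hνp i)) hw
    (fun o _ ↦ o.rec hmean fun i ↦ hx i)
  simp only [hwz, Fintype.sum_option, w, z, Option.elim_none, Option.elim_some, smul_eq_mul,
    sub_mul, sum_sub_distrib, mul_assoc, ← mul_sum] at hjensen
  unfold jensenGap
  linarith

variable [DecidableEq ι] {p q : ι → ℝ} {ν : ℝ} {S : Finset ι}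

theorem jensenGap_collapse (f : E → ℝ) (x : ι → E) (hS : S.Nonempty)
    (hpS : ∀ i ∈ S, p i = ν * q i) :
    jensenGap f (collapseWeights p q ν S) (collapsePoints x (∑ i, q i • x i) S) =
      jensenGap f p x - ν * jensenGap f q x := by
  have hf := sum_collapseWeights_smul f x (∑ i, q i • x i) hS hpS
  have hmean := sum_collapseWeights_smul id x (∑ i, q i • x i) hS hpS
  simp only [smul_eq_mul, id, sub_add_cancel] at hf hmean
  simp only [jensenGap, hf, hmean]
  ring

theorem smul_jensenGap_add_smul_jensenGap_collapse_le {s : Set E} {f : E → ℝ}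
    (hf : ConvexOn ℝ s f) {x : ι → E} (hx : ∀ i, x i ∈ s) (hp : ∑ i, p i = 1)
    (hq₀ : ∀ i, 0 ≤ q i) (hq : ∑ i, q i = 1) (hS : S.Nonempty) (hpS : ∀ i ∈ S, p i = ν * q i)
    {ν' : ℝ} (hν' : 0 ≤ ν') (hν'p : ∀ i, ν' * q i ≤ collapseWeights p q ν S i) :
    ν * jensenGap f q x + ν' * jensenGap f q (collapsePoints x (∑ i, q i • x i) S) ≤
      jensenGap f p x := by
  have hmean : ∑ i, q i • x i ∈ s := hf.1.sum_mem (fun i _ ↦ hq₀ i) hq (fun i _ ↦ hx i)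
  have hstep := smul_jensenGap_le_jensenGap hf (collapsePoints_mem S hx hmean)
    (sum_collapseWeights hp hq hS hpS) hq₀ hq hν' hν'p
  rw [jensenGap_collapse f x hS hpS] at hstep
  linarith

end JensenGap

/-- The `N = 2` case of Theorem 2 with uniform weights `q = (1/n,…,1/n)`:
the Jensen gap with weights `p` dominates a two-term sum of scaled uniform
Jensen gaps, with `m₁ = n·minᵢ pᵢ`, `m₂ = n·minᵢ p'ᵢ`. -/
theorem stmt19 {a b : ℝ} (f : ℝ → ℝ) (hf : ConvexOn ℝ (Set.Icc a b) f)
    {n : ℕ} (hn : 0 < n) (x : Fin n → ℝ) (hx : ∀ i, x i ∈ Set.Icc a b)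
    (p : Fin n → ℝ) (hp : ∀ i, 0 ≤ p i) (hps : ∑ i, p i = 1)
    (m₁ : ℝ)
    (hm₁ : m₁ = n * Finset.univ.inf' ⟨⟨0, hn⟩, Finset.mem_univ _⟩ p)
    (s : ℕ)
    (hs : s = (Finset.univ.filter
      (fun i => p i = Finset.univ.inf' ⟨⟨0, hn⟩, Finset.mem_univ _⟩ p)).card)
    (p' x' : Fin n → ℝ)
    (hp' : ∀ i, p' i =
      if p i = Finset.univ.inf' ⟨⟨0, hn⟩, Finset.mem_univ _⟩ p then m₁ / (s : ℝ)
      else p i - m₁ / (n : ℝ))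
    (hx' : ∀ i, x' i =
      if p i = Finset.univ.inf' ⟨⟨0, hn⟩, Finset.mem_univ _⟩ p then
        (1 / (n : ℝ)) * ∑ j, x j
      else x i)
    (m₂ : ℝ)
    (hm₂ : m₂ = n * Finset.univ.inf' ⟨⟨0, hn⟩, Finset.mem_univ _⟩ p') :
    ∑ i, p i * f (x i) - f (∑ i, p i * x i) ≥
      m₁ * ((1 / (n : ℝ)) * ∑ i, f (x i) - f ((1 / (n : ℝ)) * ∑ i, x i)) +
      m₂ * ((1 / (n : ℝ)) * ∑ i, f (x' i) - f ((1 / (n : ℝ)) * ∑ i, x' i)) := by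
  set μ := univ.inf' ⟨⟨0, hn⟩, mem_univ _⟩ p
  set S := univ.filter fun i ↦ p i = μ
  have hn₀ : (n : ℝ) ≠ 0 := Nat.cast_ne_zero.2 hn.ne'
  have hmin : ∀ i, μ ≤ p i := fun i ↦ inf'_le p (mem_univ i)
  obtain ⟨i₀, -, hi₀⟩ := exists_mem_eq_inf' ⟨⟨0, hn⟩, mem_univ _⟩ p
  replace hi₀ : μ = p i₀ := hi₀
  have hS : S.Nonempty := ⟨i₀, by simp [S, μ, hi₀]⟩
  have hm₁q : m₁ * (1 / n) = μ := by rw [hm₁]; field_simp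
  have hm₁₀ : 0 ≤ m₁ := by rw [hm₁, hi₀]; exact mul_nonneg n.cast_nonneg (hp i₀)
  have hq : ∑ _i : Fin n, 1 / (n : ℝ) = 1 := by simp [hn₀]
  have hp'eq : p' = collapseWeights p (fun _ ↦ 1 / n) m₁ S := funext fun i ↦ by
    simp only [hp', collapseWeights, S, mem_filter, mem_univ, true_and, hs, hm₁q,
      div_eq_mul_one_div m₁]
  have hx'eq : x' = collapsePoints x (∑ i, (1 / n : ℝ) • x i) S := funext fun i ↦ by
    simp only [hx', collapsePoints, S, mem_filter, mem_univ, true_and, smul_eq_mul, ← mul_sum]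
  have hp'₀ : ∀ i, 0 ≤ p' i :=
    hp'eq ▸ collapseWeights_nonneg S hm₁₀ fun i ↦ hm₁q ▸ hmin i
  have hm₂₀ : 0 ≤ m₂ := hm₂ ▸ mul_nonneg n.cast_nonneg (le_inf' _ _ fun i _ ↦ hp'₀ i)
  have hm₂q : ∀ i, m₂ * (1 / n) ≤ p' i := fun i ↦ by
    rw [hm₂]; field_simp; exact inf'_le p' (mem_univ i)
  have hgap := smul_jensenGap_add_smul_jensenGap_collapse_le hf hx hps (fun _ ↦ by positivity)
    hq hS (fun i hi ↦ hm₁q ▸ (mem_filter.1 hi).2) hm₂₀ (hp'eq ▸ hm₂q)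
  rw [← hx'eq, jensenGap_const, jensenGap_const] at hgap
  simpa only [jensenGap, smul_eq_mul, ge_iff_le] using hgap
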